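/- Pythagorean inequalities for the Rényi divergence: Let α > 1 and L ∈ ℒ⁺. Then for every M̄ ∈ ℒ⁺(π): R_α(L||M̄) ≤ R_α(L||P_α(L)) + R_α(P_α(L)||M̄), and R_α(M̄||L) ≤ R_α(M̄||P_{1−α}(L)) + R_α(P_{1−α}(L)||L). -/

import Mathlib

open Finset

noncomputable section

variable {X : Type*} [Fintype X] [DecidableEq X]

/-- Build a matrix with prescribed off-diagonal entries and diagonal entries
chosen so that every row sums to zero. -/
def rowZero (F : X → X → ℝ) : X → X → ℝ :=
  fun x y => if x = y then -(∑ z ∈ Finset.univ.erase x, F x z) else F x y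

/-- `L` is a Markov infinitesimal generator: nonnegative off-diagonal entries
and zero row sums. -/
def IsGen (L : X → X → ℝ) : Prop :=
  (∀ x y, x ≠ y → 0 ≤ L x y) ∧ (∀ x, ∑ y, L x y = 0)

/-- `L` is a `π`-reversible Markov generator, i.e. `L ∈ ℒ(π)`. -/
def IsRev (π : X → ℝ) (L : X → X → ℝ) : Prop :=
  IsGen L ∧ ∀ x y, π x * L x y = π y * L y x

/-- `π` is a probability distribution with full support. -/
def IsProb (π : X → ℝ) : Prop := (∀ x, 0 < π x) ∧ ∑ x, π x = 1

/-- The `π`-dual `L_π` of `L`: off-diagonal entries `π(y)L(y,x)/π(x)`,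
diagonal entries make row sums zero. -/
def dual (π : X → ℝ) (L : X → X → ℝ) : X → X → ℝ :=
  rowZero (fun x y => π y * L y x / π x)

/-- The `f`-divergence between generators: `Df f π M L = D_f(M‖L)`.
(The convention `0·f(a/0) = 0` holds automatically since `a/0 = 0` and
the factor `L x y = 0` kills the term.) -/
def Df (f : ℝ → ℝ) (π : X → ℝ) (M L : X → X → ℝ) : ℝ :=
  ∑ x, π x * ∑ y ∈ Finset.univ.erase x, L x y * f (M x y / L x y)

/-- Generator of the `α`-divergence: `f_α(t) = (t^α − αt − (1−α))/(α(α−1))`. -/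
def falpha (α : ℝ) : ℝ → ℝ :=
  fun t => (t ^ α - α * t - (1 - α)) / (α * (α - 1))

/-- The power mean reversiblization `P_p(L)`: off-diagonal entries
`((L(x,y)^p + L_π(x,y)^p)/2)^{1/p}` (set to `0` when `p < 0` and
`L(x,y)·L_π(x,y) = 0`), diagonal entries make row sums zero. -/
def pmean (p : ℝ) (π : X → ℝ) (L : X → X → ℝ) : X → X → ℝ :=
  rowZero (fun x y =>
    if p < 0 ∧ L x y * dual π L x y = 0 then 0
    else ((L x y ^ p + dual π L x y ^ p) / 2) ^ (1 / p))

/-- The Rényi divergence `R_α(M‖L) = (1/(α−1))·ln(1 + α(α−1)·D_α(M‖L))`. -/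
def Renyi (α : ℝ) (π : X → ℝ) (M L : X → X → ℝ) : ℝ :=
  (1 / (α - 1)) * Real.log (1 + α * (α - 1) * Df (falpha α) π M L)


namespace RenyiPythHelpers

lemma sum_erase_swap (F : X → X → ℝ) :
    ∑ x, ∑ y ∈ Finset.univ.erase x, F x y = ∑ x, ∑ y ∈ Finset.univ.erase x, F y x := by
  have h : ∀ (G : X → X → ℝ), ∑ x, ∑ y ∈ Finset.univ.erase x, G x y
      = ∑ x, ∑ y, if y ≠ x then G x y else 0 := by
    intro G
    refine Finset.sum_congr rfl fun x _ => ?_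
    rw [← Finset.sum_filter, Finset.filter_ne']
  rw [h, h]
  rw [Finset.sum_comm]
  refine Finset.sum_congr rfl fun x _ => Finset.sum_congr rfl fun y _ => ?_
  by_cases hxy : x = y
  · simp [hxy]
  · rw [if_pos hxy, if_pos (Ne.symm hxy)]

lemma amgm' {x y : ℝ} (hx : 0 ≤ x) (hy : 0 ≤ y) : Real.sqrt (x*y) ≤ (x+y)/2 := by
  rw [Real.sqrt_mul hx]
  nlinarith [Real.sq_sqrt hx, Real.sq_sqrt hy, sq_nonneg (Real.sqrt x - Real.sqrt y),
    Real.sqrt_nonneg x, Real.sqrt_nonneg y]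

lemma key_term {pix piy u v : ℝ} (hx : 0 < pix) (hy : 0 < piy) (hu : 0 ≤ u) (hv : 0 ≤ v) (α : ℝ) :
    piy * (pix * u / piy) ^ α * (pix * v / piy) ^ (1-α) = pix * (u ^ α * v ^ (1-α)) := by
  have hc : (0:ℝ) < pix / piy := div_pos hx hy
  have h1 : pix * u / piy = (pix/piy) * u := by ring
  have h2 : pix * v / piy = (pix/piy) * v := by ring
  rw [h1, h2, Real.mul_rpow hc.le hu, Real.mul_rpow hc.le hv]
  have h3 : (pix/piy) ^ α * (pix/piy) ^ (1-α) = pix/piy := by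
    rw [← Real.rpow_add hc]; norm_num
  have h4 : piy * (pix/piy) = pix := by field_simp
  calc piy * ((pix/piy)^α * u^α) * ((pix/piy)^(1-α) * v^(1-α))
      = piy * ((pix/piy)^α * (pix/piy)^(1-α)) * (u^α * v^(1-α)) := by ring
    _ = pix * (u ^ α * v ^ (1-α)) := by rw [h3, h4]

lemma pm_ge {α a b : ℝ} (hα : 1 < α) (ha : 0 < a) (hb : 0 < b) :
    (a+b)/2 ≤ ((a^α + b^α)/2) ^ (1/α) := by
  have hconv := convexOn_rpow (le_of_lt hα)
  have h := hconv.2 (Set.mem_Ici.2 ha.le) (Set.mem_Ici.2 hb.le)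
    (by norm_num : (0:ℝ) ≤ (1:ℝ)/2) (by norm_num : (0:ℝ) ≤ (1:ℝ)/2) (by norm_num)
  simp only [smul_eq_mul] at h
  have h' : ((a+b)/2) ^ α ≤ (a^α + b^α)/2 := by
    have e1 : (1:ℝ)/2 * a + 1/2 * b = (a+b)/2 := by ring
    have e2 : (1:ℝ)/2 * a^α + 1/2 * b^α = (a^α + b^α)/2 := by ring
    rw [e1, e2] at h; exact h
  have hm : (0:ℝ) < (a+b)/2 := by linarith
  calc (a+b)/2 = (((a+b)/2) ^ α) ^ (1/α) := by
        rw [← Real.rpow_mul hm.le, mul_one_div, div_self (by linarith : α ≠ 0), Real.rpow_one]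
    _ ≤ ((a^α + b^α)/2) ^ (1/α) := by
        apply Real.rpow_le_rpow (Real.rpow_nonneg hm.le α) h'
        positivity

lemma pm_le {q a b : ℝ} (hq : q < 0) (ha : 0 < a) (hb : 0 < b) :
    ((a^q + b^q)/2) ^ (1/q) ≤ (a+b)/2 := by
  have hm : (0:ℝ) < (a+b)/2 := by linarith
  have hgm1 : Real.sqrt (a*b) ≤ (a+b)/2 := amgm' ha.le hb.le
  have hs : (0:ℝ) < Real.sqrt (a*b) := Real.sqrt_pos.2 (mul_pos ha hb)
  have h1 : ((a+b)/2) ^ q ≤ (Real.sqrt (a*b)) ^ q :=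
    Real.rpow_le_rpow_of_nonpos hs hgm1 hq.le
  have h2 : (Real.sqrt (a*b)) ^ q = Real.sqrt (a^q * b^q) := by
    have hkey : ∀ c : ℝ, 0 < c → c ^ ((1:ℝ)/2*q) = (c^q)^((1:ℝ)/2) := fun c hc => by
      rw [← Real.rpow_mul hc.le, mul_comm]
    rw [Real.sqrt_eq_rpow, Real.sqrt_eq_rpow,
      ← Real.rpow_mul (mul_pos ha hb).le,
      Real.mul_rpow ha.le hb.le, hkey a ha, hkey b hb,
      ← Real.mul_rpow (Real.rpow_pos_of_pos ha q).le (Real.rpow_pos_of_pos hb q).le]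
  have h3 : Real.sqrt (a^q * b^q) ≤ (a^q + b^q)/2 :=
    amgm' (Real.rpow_pos_of_pos ha q).le (Real.rpow_pos_of_pos hb q).le
  have hstep : ((a+b)/2) ^ q ≤ (a^q + b^q)/2 := by rw [h2] at h1; linarith
  have h4 : ((a^q + b^q)/2) ^ (1/q) ≤ (((a+b)/2) ^ q) ^ (1/q) :=
    Real.rpow_le_rpow_of_nonpos (Real.rpow_pos_of_pos hm q) hstep
      (le_of_lt (one_div_neg.2 hq))
  calc ((a^q + b^q)/2) ^ (1/q) ≤ (((a+b)/2) ^ q) ^ (1/q) := h4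
    _ = (a+b)/2 := by
        rw [← Real.rpow_mul hm.le, mul_one_div, div_self hq.ne, Real.rpow_one]

/-- Auxiliary sums. -/
def csum (π : X → ℝ) (N : X → X → ℝ) : ℝ :=
  ∑ x, ∑ y ∈ Finset.univ.erase x, π x * N x y

def Gsum (α : ℝ) (π : X → ℝ) (M N : X → X → ℝ) : ℝ :=
  ∑ x, ∑ y ∈ Finset.univ.erase x, π x * (M x y ^ α * N x y ^ (1-α))

lemma falpha_nonneg {α t : ℝ} (hα : 1 < α) (ht : 0 ≤ t) : 0 ≤ falpha α t := by
  have h := one_add_mul_self_le_rpow_one_add (show (-1:ℝ) ≤ t - 1 by linarith) hα.le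
  have h' : 1 + (t-1) = t := by ring
  rw [h'] at h
  unfold falpha
  apply div_nonneg (by linarith) (by nlinarith)

lemma Df_nonneg {α : ℝ} {π : X → ℝ} {M N : X → X → ℝ} (hα : 1 < α)
    (hπ : ∀ x, 0 < π x) (hM : ∀ x y, x ≠ y → 0 ≤ M x y) (hN : ∀ x y, x ≠ y → 0 ≤ N x y) :
    0 ≤ Df (falpha α) π M N := by
  apply Finset.sum_nonneg
  intro x _
  apply mul_nonneg (hπ x).le
  apply Finset.sum_nonneg
  intro y hy
  have hxy : y ≠ x := Finset.ne_of_mem_erase hy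
  exact mul_nonneg (hN x y hxy.symm)
    (falpha_nonneg hα (div_nonneg (hM x y hxy.symm) (hN x y hxy.symm)))

lemma log_subadd {E1 E2 : ℝ} (h1 : 0 ≤ E1) (h2 : 0 ≤ E2) :
    Real.log (1+E1+E2) ≤ Real.log (1+E1) + Real.log (1+E2) := by
  rw [← Real.log_mul (by linarith) (by linarith)]
  apply Real.log_le_log (by linarith)
  nlinarith

lemma Df_eq {α : ℝ} {π : X → ℝ} {M N : X → X → ℝ} (hα : 1 < α)
    (hM : ∀ x y, x ≠ y → 0 ≤ M x y) (hN : ∀ x y, x ≠ y → 0 < N x y) :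
    α * (α-1) * Df (falpha α) π M N = Gsum α π M N - α * csum π M - (1-α) * csum π N := by
  have hα0 : α ≠ 0 := by linarith
  have hα1 : α - 1 ≠ 0 := by linarith
  unfold Df Gsum csum
  simp only [Finset.mul_sum]
  rw [← Finset.sum_sub_distrib, ← Finset.sum_sub_distrib]
  refine Finset.sum_congr rfl fun x _ => ?_
  rw [← Finset.sum_sub_distrib, ← Finset.sum_sub_distrib]
  refine Finset.sum_congr rfl fun y hy => ?_
  have hxy : x ≠ y := (Finset.ne_of_mem_erase hy).symm
  have hNp := hN x y hxy
  have hNt : N x y * (M x y / N x y) ^ α = M x y ^ α * N x y ^ (1-α) := by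
    rw [Real.div_rpow (hM x y hxy) hNp.le, Real.rpow_sub hNp, Real.rpow_one]
    field_simp
  have e0 : N x y * (M x y / N x y) = M x y := by field_simp
  have e1 : N x y * falpha α (M x y / N x y)
      = (M x y ^ α * N x y ^ (1-α) - α * M x y - (1-α) * N x y) / (α*(α-1)) := by
    unfold falpha
    rw [mul_div_assoc']
    congr 1
    calc N x y * ((M x y / N x y)^α - α*(M x y/N x y) - (1-α))
        = N x y * (M x y / N x y)^α - α*(N x y * (M x y / N x y)) - (1-α)*N x y := by ring
      _ = M x y ^ α * N x y ^ (1-α) - α * M x y - (1-α) * N x y := by rw [hNt, e0]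
  rw [e1]
  field_simp

lemma rowZero_off (F : X → X → ℝ) {x y : X} (h : x ≠ y) : rowZero F x y = F x y := if_neg h

lemma dual_off (π : X → ℝ) (L : X → X → ℝ) {x y : X} (h : x ≠ y) :
    dual π L x y = π y * L y x / π x := rowZero_off _ h

lemma dual_pos {π : X → ℝ} {L : X → X → ℝ} (hπ : ∀ x, 0 < π x)
    (hL : ∀ x y, x ≠ y → 0 < L x y) {x y : X} (h : x ≠ y) : 0 < dual π L x y := by
  rw [dual_off π L h]
  exact div_pos (mul_pos (hπ y) (hL y x h.symm)) (hπ x)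

lemma pmean_off {p : ℝ} {π : X → ℝ} {L : X → X → ℝ} (hπ : ∀ x, 0 < π x)
    (hL : ∀ x y, x ≠ y → 0 < L x y) {x y : X} (h : x ≠ y) :
    pmean p π L x y = ((L x y ^ p + dual π L x y ^ p) / 2) ^ (1 / p) := by
  rw [pmean, rowZero_off _ h, if_neg]
  rintro ⟨-, h0⟩
  exact (mul_pos (hL x y h) (dual_pos hπ hL h)).ne' h0

lemma pmean_pos {p : ℝ} {π : X → ℝ} {L : X → X → ℝ} (hπ : ∀ x, 0 < π x)
    (hL : ∀ x y, x ≠ y → 0 < L x y) {x y : X} (h : x ≠ y) : 0 < pmean p π L x y := by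
  rw [pmean_off hπ hL h]
  have h1 := Real.rpow_pos_of_pos (hL x y h) p
  have h2 := Real.rpow_pos_of_pos (dual_pos hπ hL h) p
  positivity

lemma pmean_rpow {p : ℝ} (hp : p ≠ 0) {π : X → ℝ} {L : X → X → ℝ} (hπ : ∀ x, 0 < π x)
    (hL : ∀ x y, x ≠ y → 0 < L x y) {x y : X} (h : x ≠ y) :
    pmean p π L x y ^ p = (L x y ^ p + dual π L x y ^ p) / 2 := by
  rw [pmean_off hπ hL h, ← Real.rpow_mul, one_div, inv_mul_cancel₀ hp, Real.rpow_one]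
  have h1 := Real.rpow_pos_of_pos (hL x y h) p
  have h2 := Real.rpow_pos_of_pos (dual_pos hπ hL h) p
  positivity

lemma pm_hom {p c a b : ℝ} (hp : p ≠ 0) (hc : 0 < c) (ha : 0 < a) (hb : 0 < b) :
    c * ((a^p + b^p)/2)^(1/p) = (((c*a)^p + (c*b)^p)/2)^(1/p) := by
  have hA : (0:ℝ) < (a^p + b^p)/2 := by
    have := Real.rpow_pos_of_pos ha p; have := Real.rpow_pos_of_pos hb p; positivity
  have hc1 : c = (c ^ p) ^ (1/p) := by
    rw [← Real.rpow_mul hc.le, mul_one_div, div_self hp, Real.rpow_one]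
  rw [Real.mul_rpow hc.le ha.le, Real.mul_rpow hc.le hb.le]
  calc c * ((a^p + b^p)/2)^(1/p) = (c^p)^(1/p) * ((a^p + b^p)/2)^(1/p) := by rw [← hc1]
    _ = (c^p * ((a^p + b^p)/2))^(1/p) := by
        rw [← Real.mul_rpow (Real.rpow_pos_of_pos hc p).le hA.le]
    _ = ((c^p * a^p + c^p * b^p)/2)^(1/p) := by ring_nf

lemma pmean_rev {p : ℝ} (hp : p ≠ 0) {π : X → ℝ} {L : X → X → ℝ} (hπ : ∀ x, 0 < π x)
    (hL : ∀ x y, x ≠ y → 0 < L x y) {x y : X} (h : x ≠ y) :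
    π x * pmean p π L x y = π y * pmean p π L y x := by
  rw [pmean_off hπ hL h, pmean_off hπ hL h.symm, dual_off π L h, dual_off π L h.symm]
  rw [pm_hom hp (hπ x) (hL x y h) (div_pos (mul_pos (hπ y) (hL y x h.symm)) (hπ x)),
    pm_hom hp (hπ y) (hL y x h.symm) (div_pos (mul_pos (hπ x) (hL x y h)) (hπ y))]
  have e1 : π x * (π y * L y x / π x) = π y * L y x := by
    rw [mul_div_assoc', mul_div_cancel_left₀ _ (hπ x).ne']
  have e2 : π y * (π x * L x y / π y) = π x * L x y := by
    rw [mul_div_assoc', mul_div_cancel_left₀ _ (hπ y).ne']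
  rw [e1, e2, add_comm]

lemma Gsum_swap (α : ℝ) {π : X → ℝ} (hπ : ∀ x, 0 < π x) (A B : X → X → ℝ)
    (hA : ∀ x y, x ≠ y → 0 ≤ A x y) (hB : ∀ x y, x ≠ y → 0 ≤ B x y) :
    Gsum α π A B = ∑ x, ∑ y ∈ Finset.univ.erase x,
      π x * ((π y * A y x / π x) ^ α * (π y * B y x / π x) ^ (1-α)) := by
  unfold Gsum
  rw [sum_erase_swap (fun x y => π x * (A x y ^ α * B x y ^ (1-α)))]
  refine Finset.sum_congr rfl fun x _ => Finset.sum_congr rfl fun y hy => ?_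
  have hxy : x ≠ y := (Finset.ne_of_mem_erase hy).symm
  have hk := key_term (hπ y) (hπ x) (hA y x hxy.symm) (hB y x hxy.symm) α
  calc π y * (A y x ^ α * B y x ^ (1-α))
      = π x * (π y * A y x / π x) ^ α * (π y * B y x / π x) ^ (1-α) := hk.symm
    _ = π x * ((π y * A y x / π x) ^ α * (π y * B y x / π x) ^ (1-α)) := by ring

lemma GI1 {α : ℝ} (hα0 : α ≠ 0) {π : X → ℝ} (hπ : ∀ x, 0 < π x)
    {L : X → X → ℝ} (hL : ∀ x y, x ≠ y → 0 < L x y) (N : X → X → ℝ)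
    (hNrev : ∀ x y, π x * N x y = π y * N y x) (hN : ∀ x y, x ≠ y → 0 ≤ N x y) :
    Gsum α π L N = Gsum α π (pmean α π L) N := by
  have hsw := Gsum_swap α hπ L N (fun x y h => (hL x y h).le) hN
  have h2 : Gsum α π L N = ∑ x, ∑ y ∈ Finset.univ.erase x,
      π x * (dual π L x y ^ α * N x y ^ (1-α)) := by
    rw [hsw]
    refine Finset.sum_congr rfl fun x _ => Finset.sum_congr rfl fun y hy => ?_
    have hxy : x ≠ y := (Finset.ne_of_mem_erase hy).symm
    rw [← dual_off π L hxy]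
    congr 2
    rw [← hNrev x y, mul_div_cancel_left₀ _ (hπ x).ne']
  have h3 : Gsum α π L N + (∑ x, ∑ y ∈ Finset.univ.erase x,
      π x * (dual π L x y ^ α * N x y ^ (1-α))) = 2 * Gsum α π (pmean α π L) N := by
    unfold Gsum
    rw [Finset.mul_sum, ← Finset.sum_add_distrib]
    refine Finset.sum_congr rfl fun x _ => ?_
    rw [Finset.mul_sum, ← Finset.sum_add_distrib]
    refine Finset.sum_congr rfl fun y hy => ?_
    have hxy : x ≠ y := (Finset.ne_of_mem_erase hy).symm
    have hP := pmean_rpow hα0 hπ hL hxy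
    rw [hP]
    ring
  rw [← h2] at h3
  linarith

lemma GI2 {α : ℝ} (hq : 1 - α ≠ 0) {π : X → ℝ} (hπ : ∀ x, 0 < π x)
    {L : X → X → ℝ} (hL : ∀ x y, x ≠ y → 0 < L x y) (M : X → X → ℝ)
    (hMrev : ∀ x y, π x * M x y = π y * M y x) (hM : ∀ x y, x ≠ y → 0 ≤ M x y) :
    Gsum α π M L = Gsum α π M (pmean (1-α) π L) := by
  have hsw := Gsum_swap α hπ M L hM (fun x y h => (hL x y h).le)
  have h2 : Gsum α π M L = ∑ x, ∑ y ∈ Finset.univ.erase x,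
      π x * (M x y ^ α * dual π L x y ^ (1-α)) := by
    rw [hsw]
    refine Finset.sum_congr rfl fun x _ => Finset.sum_congr rfl fun y hy => ?_
    have hxy : x ≠ y := (Finset.ne_of_mem_erase hy).symm
    rw [← dual_off π L hxy]
    congr 2
    rw [← hMrev x y, mul_div_cancel_left₀ _ (hπ x).ne']
  have h3 : Gsum α π M L + (∑ x, ∑ y ∈ Finset.univ.erase x,
      π x * (M x y ^ α * dual π L x y ^ (1-α))) = 2 * Gsum α π M (pmean (1-α) π L) := by
    unfold Gsum
    rw [Finset.mul_sum, ← Finset.sum_add_distrib]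
    refine Finset.sum_congr rfl fun x _ => ?_
    rw [Finset.mul_sum, ← Finset.sum_add_distrib]
    refine Finset.sum_congr rfl fun y hy => ?_
    have hxy : x ≠ y := (Finset.ne_of_mem_erase hy).symm
    have hP := pmean_rpow hq hπ hL hxy
    rw [hP]
    ring
  rw [← h2] at h3
  linarith

lemma GPP {α : ℝ} {π : X → ℝ} {P : X → X → ℝ} (hP : ∀ x y, x ≠ y → 0 < P x y) :
    Gsum α π P P = csum π P := by
  unfold Gsum csum
  refine Finset.sum_congr rfl fun x _ => Finset.sum_congr rfl fun y hy => ?_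
  have hxy : x ≠ y := (Finset.ne_of_mem_erase hy).symm
  rw [← Real.rpow_add (hP x y hxy)]
  norm_num

lemma csum_dual {π : X → ℝ} (hπ : ∀ x, 0 < π x) (L : X → X → ℝ) :
    (∑ x, ∑ y ∈ Finset.univ.erase x, π x * dual π L x y) = csum π L := by
  have h1 : (∑ x, ∑ y ∈ Finset.univ.erase x, π x * dual π L x y)
      = ∑ x, ∑ y ∈ Finset.univ.erase x, π y * L y x := by
    refine Finset.sum_congr rfl fun x _ => Finset.sum_congr rfl fun y hy => ?_
    have hxy : x ≠ y := (Finset.ne_of_mem_erase hy).symm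
    rw [dual_off π L hxy, mul_div_assoc', mul_div_cancel_left₀ _ (hπ x).ne']
  rw [h1, sum_erase_swap (fun x y => π y * L y x)]
  rfl

lemma renyi_formula {α : ℝ} (hα : 1 < α) {π : X → ℝ} {M N : X → X → ℝ}
    (hM : ∀ x y, x ≠ y → 0 ≤ M x y) (hN : ∀ x y, x ≠ y → 0 < N x y) :
    Renyi α π M N = (1/(α-1)) * Real.log (1 + (Gsum α π M N - α * csum π M - (1-α) * csum π N)) := by
  unfold Renyi
  rw [← Df_eq hα hM hN]

end RenyiPythHelpers

open RenyiPythHelpers in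
/-- **Pythagorean inequalities for the Rényi divergence** (Theorem 3.10(3)):
for `α > 1`, `L ∈ ℒ⁺` and every `M̄ ∈ ℒ⁺(π)`,
`R_α(L‖M̄) ≤ R_α(L‖P_α(L)) + R_α(P_α(L)‖M̄)` and
`R_α(M̄‖L) ≤ R_α(M̄‖P_{1−α}(L)) + R_α(P_{1−α}(L)‖L)`. -/
theorem renyi_pythagorean (π : X → ℝ) (hπ : IsProb π)
    (α : ℝ) (hα : 1 < α)
    (L : X → X → ℝ) (hL : IsGen L) (hLpos : ∀ x y, x ≠ y → 0 < L x y)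
    (Mbar : X → X → ℝ) (hMbar : IsRev π Mbar)
    (hMbarpos : ∀ x y, x ≠ y → 0 < Mbar x y) :
    Renyi α π L Mbar ≤
      Renyi α π L (pmean α π L) + Renyi α π (pmean α π L) Mbar ∧
    Renyi α π Mbar L ≤
      Renyi α π Mbar (pmean (1 - α) π L) + Renyi α π (pmean (1 - α) π L) L := by
  have hπp := hπ.1
  have hα0 : α ≠ 0 := by linarith
  have hα1 : (0:ℝ) < α - 1 := by linarith
  have hq : 1 - α ≠ 0 := by linarith
  have hqneg : 1 - α < 0 := by linarith
  have hMrev := hMbar.2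
  have hMnn : ∀ x y, x ≠ y → 0 ≤ Mbar x y := fun x y h => (hMbarpos x y h).le
  have hLnn : ∀ x y, x ≠ y → 0 ≤ L x y := fun x y h => (hLpos x y h).le
  set P := pmean α π L with hPdef
  set Q := pmean (1-α) π L with hQdef
  have hPpos : ∀ x y, x ≠ y → 0 < P x y := fun x y h => pmean_pos hπp hLpos h
  have hQpos : ∀ x y, x ≠ y → 0 < Q x y := fun x y h => pmean_pos hπp hLpos h
  have hPnn : ∀ x y, x ≠ y → 0 ≤ P x y := fun x y h => (hPpos x y h).le
  have hQnn : ∀ x y, x ≠ y → 0 ≤ Q x y := fun x y h => (hQpos x y h).le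
  have hPrev : ∀ x y, π x * P x y = π y * P y x := by
    intro x y
    by_cases h : x = y
    · rw [h]
    · exact pmean_rev hα0 hπp hLpos h
  have hQrev : ∀ x y, π x * Q x y = π y * Q y x := by
    intro x y
    by_cases h : x = y
    · rw [h]
    · exact pmean_rev hq hπp hLpos h
  have hdd := csum_dual hπp L
  -- csum comparisons
  have hcPL : csum π L ≤ csum π P := by
    have hsum : csum π L + csum π L = ∑ x, ∑ y ∈ Finset.univ.erase x,
        π x * (L x y + dual π L x y) := by
      nth_rewrite 1 [← hdd]
      unfold csum
      rw [← Finset.sum_add_distrib]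
      refine Finset.sum_congr rfl fun x _ => ?_
      rw [← Finset.sum_add_distrib]
      exact Finset.sum_congr rfl fun y hy => by ring
    have hle : (∑ x, ∑ y ∈ Finset.univ.erase x, π x * (L x y + dual π L x y))
        ≤ 2 * csum π P := by
      unfold csum
      rw [Finset.mul_sum]
      refine Finset.sum_le_sum fun x _ => ?_
      rw [Finset.mul_sum]
      refine Finset.sum_le_sum fun y hy => ?_
      have hxy : x ≠ y := (Finset.ne_of_mem_erase hy).symm
      have hpm : (L x y + dual π L x y)/2 ≤ P x y := by
        rw [hPdef, pmean_off hπp hLpos hxy]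
        exact pm_ge hα (hLpos x y hxy) (dual_pos hπp hLpos hxy)
      nlinarith [hπp x]
    linarith
  have hcQL : csum π Q ≤ csum π L := by
    have hsum : csum π L + csum π L = ∑ x, ∑ y ∈ Finset.univ.erase x,
        π x * (L x y + dual π L x y) := by
      nth_rewrite 1 [← hdd]
      unfold csum
      rw [← Finset.sum_add_distrib]
      refine Finset.sum_congr rfl fun x _ => ?_
      rw [← Finset.sum_add_distrib]
      exact Finset.sum_congr rfl fun y hy => by ring
    have hle : 2 * csum π Q
        ≤ ∑ x, ∑ y ∈ Finset.univ.erase x, π x * (L x y + dual π L x y) := by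
      unfold csum
      rw [Finset.mul_sum]
      refine Finset.sum_le_sum fun x _ => ?_
      rw [Finset.mul_sum]
      refine Finset.sum_le_sum fun y hy => ?_
      have hxy : x ≠ y := (Finset.ne_of_mem_erase hy).symm
      have hpm : Q x y ≤ (L x y + dual π L x y)/2 := by
        rw [hQdef, pmean_off hπp hLpos hxy]
        exact pm_le hqneg (hLpos x y hxy) (dual_pos hπp hLpos hxy)
      nlinarith [hπp x]
    linarith
  -- the G identities
  have hI1 : Gsum α π L Mbar = Gsum α π P Mbar := GI1 hα0 hπp hLpos Mbar hMrev hMnn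
  have hI1P : Gsum α π L P = Gsum α π P P := GI1 hα0 hπp hLpos P hPrev hPnn
  have hGPP : Gsum α π P P = csum π P := GPP hPpos
  have hI2 : Gsum α π Mbar L = Gsum α π Mbar Q := GI2 hq hπp hLpos Mbar hMrev hMnn
  have hI2Q : Gsum α π Q L = Gsum α π Q Q := GI2 hq hπp hLpos Q hQrev hQnn
  have hGQQ : Gsum α π Q Q = csum π Q := GPP hQpos
  -- nonnegativity of divergence combinations
  have hd1 : 0 ≤ Gsum α π P Mbar - α * csum π P - (1-α) * csum π Mbar := by
    rw [← Df_eq hα hPnn hMbarpos]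
    have := Df_nonneg (M := P) (N := Mbar) hα hπp hPnn hMnn
    have h := mul_nonneg (mul_nonneg (by linarith : (0:ℝ) ≤ α) hα1.le) this
    linarith
  have hd2 : 0 ≤ Gsum α π Mbar Q - α * csum π Mbar - (1-α) * csum π Q := by
    rw [← Df_eq hα hMnn hQpos]
    have := Df_nonneg (M := Mbar) (N := Q) hα hπp hMnn hQnn
    have h := mul_nonneg (mul_nonneg (by linarith : (0:ℝ) ≤ α) hα1.le) this
    linarith
  constructor
  · -- first inequality
    set E1 : ℝ := α * (csum π P - csum π L) with hE1
    set E2 : ℝ := Gsum α π L Mbar - α * csum π P - (1-α) * csum π Mbar with hE2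
    have hE1nn : 0 ≤ E1 := by
      rw [hE1]; nlinarith
    have hE2nn : 0 ≤ E2 := by rw [hE2, hI1]; exact hd1
    have r1 : Renyi α π L Mbar = (1/(α-1)) * Real.log (1 + (E1 + E2)) := by
      rw [renyi_formula hα hLnn hMbarpos, hE1, hE2]; ring_nf
    have r2 : Renyi α π L P = (1/(α-1)) * Real.log (1 + E1) := by
      rw [renyi_formula hα hLnn hPpos, hI1P, hGPP, hE1]; ring_nf
    have r3 : Renyi α π P Mbar = (1/(α-1)) * Real.log (1 + E2) := by
      rw [renyi_formula hα hPnn hMbarpos, hE2, hI1]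
    rw [r1, r2, r3, ← mul_add]
    apply mul_le_mul_of_nonneg_left _ (by positivity)
    have := log_subadd hE1nn hE2nn
    calc Real.log (1 + (E1 + E2)) = Real.log (1 + E1 + E2) := by ring_nf
      _ ≤ Real.log (1 + E1) + Real.log (1 + E2) := this
  · -- second inequality
    set E1 : ℝ := Gsum α π Mbar L - α * csum π Mbar - (1-α) * csum π Q with hE1
    set E2 : ℝ := (1-α) * (csum π Q - csum π L) with hE2
    have hE1nn : 0 ≤ E1 := by rw [hE1, hI2]; exact hd2
    have hE2nn : 0 ≤ E2 := by rw [hE2]; nlinarith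
    have r1 : Renyi α π Mbar L = (1/(α-1)) * Real.log (1 + (E1 + E2)) := by
      rw [renyi_formula hα hMnn hLpos, hE1, hE2]; ring_nf
    have r2 : Renyi α π Mbar Q = (1/(α-1)) * Real.log (1 + E1) := by
      rw [renyi_formula hα hMnn hQpos, hE1, hI2]
    have r3 : Renyi α π Q L = (1/(α-1)) * Real.log (1 + E2) := by
      rw [renyi_formula hα hQnn hLpos, hI2Q, hGQQ, hE2]; ring_nf
    rw [r1, r2, r3, ← mul_add]
    apply mul_le_mul_of_nonneg_left _ (by positivity)
    have := log_subadd hE1nn hE2nn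
    calc Real.log (1 + (E1 + E2)) = Real.log (1 + E1 + E2) := by ring_nf
      _ ≤ Real.log (1 + E1) + Real.log (1 + E2) := this

end
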